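/- arXiv:1709.06329 — 2 statements merged into one kernel-verified Lean document; each statement's English description precedes it below -/
import Mathlib

section
/- For all 1 ≤ m, n ≤ N with m ≠ n, the matrices L_m, R_m, K_m ∈ Mat_P(ℂ) satisfy: L_m K_n = K_n L_m, R_m K_n = K_n R_m, q·L_m K_m = K_m L_m, and R_m K_m = q·K_m R_m. -/
/-! Since `K_n` is diagonal, `(L_m K_n)_{y,z} = (L_m)_{y,z} k_n(z)` and
`(K_n L_m)_{y,z} = k_n(y) (L_m)_{y,z}`, so each identity only has to be checked on the pairs
where `L_m` (resp. `R_m`) is nonzero, i.e. on `m`-covers. An `m`-cover raises the `m`-th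
coordinate of the location by one and keeps the others, so the diagonal entry of `K_n` is
unchanged for `n ≠ m` and that of `K_m` is divided by `q`. -/

/-- The `m`-th coordinate of the location of the subspace `y` with respect to the
flag `x`: `dim(y ⊓ x_m) − dim(y ⊓ x_{m−1})`. -/
noncomputable def loc {F H : Type*} [Field F] [AddCommGroup H] [Module F H] {N : ℕ}
    (x : Fin (N + 1) → Submodule F H) (y : Submodule F H) (m : Fin N) : ℕ :=
  Module.finrank F ↥(y ⊓ x m.succ) - Module.finrank F ↥(y ⊓ x m.castSucc)

/-- `y` covers `z` in the subspace lattice. -/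
def Covers {F H : Type*} [Field F] [AddCommGroup H] [Module F H]
    (y z : Submodule F H) : Prop :=
  z ≤ y ∧ Module.finrank F ↥z + 1 = Module.finrank F ↥y

/-- `y` `m`-covers `z`: `y` covers `z` and the location of `y` is the location of `z`
plus the tuple with a `1` in coordinate `m` and `0` elsewhere. -/
def MCovers {F H : Type*} [Field F] [AddCommGroup H] [Module F H] {N : ℕ}
    (x : Fin (N + 1) → Submodule F H) (m : Fin N) (y z : Submodule F H) : Prop :=
  Covers y z ∧ ∀ i, loc x y i = loc x z i + if i = m then 1 else 0

open Classical in
/-- The lowering matrix `L_m`: `(L_m)_{y,z} = 1` if `z` `m`-covers `y`, else `0`. -/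
noncomputable def Lmat {F H : Type*} [Field F] [AddCommGroup H] [Module F H] {N : ℕ}
    (x : Fin (N + 1) → Submodule F H) (m : Fin N) :
    Matrix (Submodule F H) (Submodule F H) ℂ :=
  Matrix.of fun y z => if MCovers x m z y then 1 else 0

open Classical in
/-- The raising matrix `R_m`: `(R_m)_{y,z} = 1` if `y` `m`-covers `z`, else `0`. -/
noncomputable def Rmat {F H : Type*} [Field F] [AddCommGroup H] [Module F H] {N : ℕ}
    (x : Fin (N + 1) → Submodule F H) (m : Fin N) :
    Matrix (Submodule F H) (Submodule F H) ℂ :=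
  Matrix.of fun y z => if MCovers x m y z then 1 else 0

open Classical in
/-- The diagonal matrix `K_m` with `(y,y)`-entry `q^{1/2 − μ_m}` for `y ∈ P_μ`. -/
noncomputable def Kmat {F H : Type*} [Field F] [AddCommGroup H] [Module F H] {N : ℕ}
    (x : Fin (N + 1) → Submodule F H) (m : Fin N) (q : ℕ) :
    Matrix (Submodule F H) (Submodule F H) ℂ :=
  Matrix.diagonal fun y => (q : ℂ) ^ ((1 : ℂ) / 2 - (loc x y m : ℂ))

namespace Matrix

variable {ι R : Type*} [Fintype ι] [DecidableEq ι] [CommRing R]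

theorem smul_mul_diagonal_eq_smul_diagonal_mul {A : Matrix ι ι R} {d : ι → R} {a b : R}
    (h : ∀ i j, A i j ≠ 0 → a * d j = b * d i) :
    a • (A * diagonal d) = b • (diagonal d * A) := by
  ext i j
  simp only [smul_apply, mul_diagonal, diagonal_mul, smul_eq_mul]
  by_cases hij : A i j = 0
  · simp [hij]
  · linear_combination A i j * h i j hij

theorem mul_diagonal_comm_of_apply_ne_zero {A : Matrix ι ι R} {d : ι → R}
    (h : ∀ i j, A i j ≠ 0 → d j = d i) : A * diagonal d = diagonal d * A := by
  simpa using smul_mul_diagonal_eq_smul_diagonal_mul (A := A) (a := 1) (b := 1)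
    (by simpa using h)

end Matrix

theorem Complex.cpow_sub_one_mul_self {q : ℂ} (hq : q ≠ 0) (s : ℂ) :
    q ^ (s - 1) * q = q ^ s := by
  rw [Complex.cpow_sub _ _ hq, Complex.cpow_one, div_mul_cancel₀ _ hq]

section Flag

variable {F H : Type*} [Field F] [AddCommGroup H] [Module F H] {N : ℕ}
  {x : Fin (N + 1) → Submodule F H} {m n : Fin N} {y z : Submodule F H}

theorem MCovers.loc_eq_of_ne (h : MCovers x m y z) (hnm : n ≠ m) : loc x y n = loc x z n := by
  simpa [hnm] using h.2 n

theorem MCovers.loc_self (h : MCovers x m y z) : loc x y m = loc x z m + 1 := by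
  simpa using h.2 m

theorem mcovers_of_Lmat_ne_zero (h : Lmat x m y z ≠ 0) : MCovers x m z y := by
  by_contra hc
  simp [Lmat, hc] at h

theorem mcovers_of_Rmat_ne_zero (h : Rmat x m y z ≠ 0) : MCovers x m y z := by
  by_contra hc
  simp [Rmat, hc] at h

theorem MCovers.Kmat_entry_mul (h : MCovers x m y z) {q : ℕ} (hq : q ≠ 0) :
    (q : ℂ) ^ ((1 : ℂ) / 2 - (loc x y m : ℂ)) * q =
      (q : ℂ) ^ ((1 : ℂ) / 2 - (loc x z m : ℂ)) := by
  rw [h.loc_self, Nat.cast_succ, ← sub_sub, Complex.cpow_sub_one_mul_self (Nat.cast_ne_zero.2 hq)]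

variable [Fintype (Submodule F H)] (q : ℕ)

theorem Lmat_mul_Kmat_of_ne (hmn : m ≠ n) : Lmat x m * Kmat x n q = Kmat x n q * Lmat x m :=
  Matrix.mul_diagonal_comm_of_apply_ne_zero fun _ _ h ↦ by
    rw [(mcovers_of_Lmat_ne_zero h).loc_eq_of_ne hmn.symm]

theorem Rmat_mul_Kmat_of_ne (hmn : m ≠ n) : Rmat x m * Kmat x n q = Kmat x n q * Rmat x m :=
  Matrix.mul_diagonal_comm_of_apply_ne_zero fun _ _ h ↦ by
    rw [(mcovers_of_Rmat_ne_zero h).loc_eq_of_ne hmn.symm]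

theorem smul_Lmat_mul_Kmat (hq : q ≠ 0) :
    (q : ℂ) • (Lmat x m * Kmat x m q) = Kmat x m q * Lmat x m := by
  rw [← one_smul ℂ (Kmat x m q * Lmat x m)]
  exact Matrix.smul_mul_diagonal_eq_smul_diagonal_mul fun _ _ h ↦ by
    rw [one_mul, mul_comm, (mcovers_of_Lmat_ne_zero h).Kmat_entry_mul hq]

theorem Rmat_mul_Kmat (hq : q ≠ 0) :
    Rmat x m * Kmat x m q = (q : ℂ) • (Kmat x m q * Rmat x m) := by
  rw [← one_smul ℂ (Rmat x m * Kmat x m q)]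
  exact Matrix.smul_mul_diagonal_eq_smul_diagonal_mul fun _ _ h ↦ by
    rw [one_mul, mul_comm, (mcovers_of_Rmat_ne_zero h).Kmat_entry_mul hq]

end Flag

theorem stmt16_general {F : Type*} [Field F] [Fintype F] {H : Type*} [AddCommGroup H] [Module F H]
    [Fintype (Submodule F H)] {N : ℕ}
    (x : Fin (N + 1) → Submodule F H) (m n : Fin N) (hmn : m ≠ n) :
    Lmat x m * Kmat x n (Fintype.card F) = Kmat x n (Fintype.card F) * Lmat x m ∧
      Rmat x m * Kmat x n (Fintype.card F) = Kmat x n (Fintype.card F) * Rmat x m ∧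
      (Fintype.card F : ℂ) • (Lmat x m * Kmat x m (Fintype.card F)) =
        Kmat x m (Fintype.card F) * Lmat x m ∧
      Rmat x m * Kmat x m (Fintype.card F) =
        (Fintype.card F : ℂ) • (Kmat x m (Fintype.card F) * Rmat x m) :=
  ⟨Lmat_mul_Kmat_of_ne _ hmn, Rmat_mul_Kmat_of_ne _ hmn,
    smul_Lmat_mul_Kmat _ Fintype.card_ne_zero, Rmat_mul_Kmat _ Fintype.card_ne_zero⟩

/-- For `m ≠ n`: `L_m K_n = K_n L_m`, `R_m K_n = K_n R_m`, `q L_m K_m = K_m L_m`,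
and `R_m K_m = q K_m R_m`. -/
theorem stmt16 {F : Type*} [Field F] [Fintype F] {H : Type*} [AddCommGroup H] [Module F H]
    [FiniteDimensional F H] [Fintype (Submodule F H)] {N : ℕ}
    (hN : 1 ≤ N) (hdim : Module.finrank F H = N)
    (x : Fin (N + 1) → Submodule F H) (hrank : ∀ i, Module.finrank F ↥(x i) = (i : ℕ))
    (hmono : StrictMono x) (m n : Fin N) (hmn : m ≠ n) :
    Lmat x m * Kmat x n (Fintype.card F) = Kmat x n (Fintype.card F) * Lmat x m ∧
      Rmat x m * Kmat x n (Fintype.card F) = Kmat x n (Fintype.card F) * Rmat x m ∧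
      (Fintype.card F : ℂ) • (Lmat x m * Kmat x m (Fintype.card F)) =
        Kmat x m (Fintype.card F) * Lmat x m ∧
      Rmat x m * Kmat x m (Fintype.card F) =
        (Fintype.card F : ℂ) • (Kmat x m (Fintype.card F) * Rmat x m) :=
  stmt16_general x m n hmn
end

section
/- For all 1 ≤ m, n ≤ N, the matrices L_m, R_m ∈ Mat_P(ℂ) satisfy: L_m² = R_m² = 0; q·L_m L_n = L_n L_m whenever m < n; R_m R_n = q·R_n R_m whenever m < n; and L_m R_n = R_n L_m whenever m ≠ n. -/
/-!
For a cover `z ⋖ y` the function `i ↦ dim (y ∩ x_i) - dim (z ∩ x_i)` is a monotone `0/1`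
step, so every cover has a unique type `m` (the position of the jump), and the `m`-th location
coordinate is at most one; this kills `L_m²` and `R_m²`.

For `m ≠ n`, a subspace covering `y` and `z` with types `m` and `n` must be `y + z`, and then
`y ∩ z` is covered by `y` and `z` with the types exchanged (the total jump `u ⋖ v` is the same
along both sides of the square), and conversely: both sides of `L_m R_n = R_n L_m` are the
same `0/1` entry.

For `m < n` and `u ⊆ v` of codimension two, pick `e ∈ (v ∩ x_{m+1}) \ u`. A type `n` cover
does not change the intersection with `x_{m+1}`, so a chain `u ⋖ w ⋖ v` has types `(m, n)`
exactly when `e ∈ w`: this happens only for `w = u + ⟨e⟩`, while the other `q` of the `q + 1`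
hyperplanes of `v` over `u` give the chains of types `(n, m)`.
-/

open Module Submodule

section LinearAlgebra

variable {F H : Type*} [Field F] [AddCommGroup H] [Module F H] [FiniteDimensional F H]

theorem Submodule.finrank_inf_add_finrank_le {a b : Submodule F H} (hab : a ≤ b)
    (c : Submodule F H) :
    finrank F ↥(b ⊓ c) + finrank F a ≤ finrank F ↥(a ⊓ c) + finrank F b := by
  have hdim := finrank_sup_add_finrank_inf_eq (b ⊓ c) a
  have hsup := finrank_mono (sup_le inf_le_left hab : b ⊓ c ⊔ a ≤ b)
  rw [inf_right_comm, inf_eq_right.2 hab] at hdim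
  omega

namespace Covers

variable {u v w y z : Submodule F H}

theorem sup_eq (hy : Covers w y) (hz : Covers w z) (hyz : y ≠ z) : y ⊔ z = w := by
  have hdy := hy.2
  have hdz := hz.2
  have hlt : y < y ⊔ z := lt_of_le_of_ne le_sup_left fun he =>
    hyz (eq_of_le_of_finrank_eq (le_sup_right.trans he.ge) (by omega)).symm
  have := finrank_lt_finrank_of_lt hlt
  exact eq_of_le_of_finrank_le (sup_le hy.1 hz.1) (by omega)

theorem inf_eq (hy : Covers y u) (hz : Covers z u) (hyz : y ≠ z) : y ⊓ z = u := by
  have hdy := hy.2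
  have hdz := hz.2
  have hlt : y ⊓ z < y := lt_of_le_of_ne inf_le_left fun he =>
    hyz (eq_of_le_of_finrank_eq (he.ge.trans inf_le_right) (by omega))
  have := finrank_lt_finrank_of_lt hlt
  exact (eq_of_le_of_finrank_le (le_inf hy.1 hz.1) (by omega)).symm

theorem inf_covers (hy : Covers w y) (hz : Covers w z) (hyz : y ≠ z) :
    Covers y (y ⊓ z) ∧ Covers z (y ⊓ z) := by
  have hdim := finrank_sup_add_finrank_inf_eq y z
  have hdy := hy.2
  have hdz := hz.2
  rw [hy.sup_eq hz hyz] at hdim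
  exact ⟨⟨inf_le_left, by omega⟩, ⟨inf_le_right, by omega⟩⟩

theorem sup_covers (hy : Covers y u) (hz : Covers z u) (hyz : y ≠ z) :
    Covers (y ⊔ z) y ∧ Covers (y ⊔ z) z := by
  have hdim := finrank_sup_add_finrank_inf_eq y z
  have hdy := hy.2
  have hdz := hz.2
  rw [hy.inf_eq hz hyz] at hdim
  exact ⟨⟨le_sup_left, by omega⟩, ⟨le_sup_right, by omega⟩⟩

theorem sup_span_singleton_eq (h : Covers w u) {g : H} (hgw : g ∈ w) (hgu : g ∉ u) :
    u ⊔ span F {g} = w :=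
  eq_of_le_of_finrank_eq (sup_le h.1 ((span_singleton_le_iff_mem _ _).2 hgw))
    (by rw [finrank_sup_span_singleton hgu, h.2])

end Covers

theorem covers_sup_span_singleton {u : Submodule F H} {g : H} (hg : g ∉ u) :
    Covers (u ⊔ span F {g}) u :=
  ⟨le_sup_left, (finrank_sup_span_singleton hg).symm⟩

variable {u v : Submodule F H} {e : H}

theorem card_covers_covers_mem (huv : u ≤ v) (hdim : finrank F u + 2 = finrank F v)
    (hev : e ∈ v) (heu : e ∉ u) :
    Nat.card {w // (Covers w u ∧ Covers v w) ∧ e ∈ w} = 1 := by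
  refine Nat.card_eq_one_iff_exists.2
    ⟨⟨u ⊔ span F {e}, ⟨covers_sup_span_singleton heu, ?_⟩,
      mem_sup_right (mem_span_singleton_self e)⟩, fun w => Subtype.ext ?_⟩
  · exact ⟨sup_le huv ((span_singleton_le_iff_mem _ _).2 hev),
      by rw [finrank_sup_span_singleton heu]; omega⟩
  · exact (w.2.1.1.sup_span_singleton_eq w.2.2 heu).symm

/-- The `q` hyperplanes of `v` over `u` avoiding `e` are `u + ⟨f + c e⟩`, `c ∈ F`, for any
fixed `f ∈ v` outside `u + ⟨e⟩`. -/
theorem card_covers_covers_not_mem (huv : u ≤ v) (hdim : finrank F u + 2 = finrank F v)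
    (hev : e ∈ v) (heu : e ∉ u) :
    Nat.card {w // (Covers w u ∧ Covers v w) ∧ e ∉ w} = Nat.card F := by
  have hue : Covers (u ⊔ span F {e}) u := covers_sup_span_singleton heu
  have hlt : u ⊔ span F {e} < v := lt_of_le_of_ne
    (sup_le huv ((span_singleton_le_iff_mem _ _).2 hev)) fun h => by
      have := hue.2
      rw [h] at this
      omega
  obtain ⟨f, hfv, hfe⟩ := SetLike.exists_of_lt hlt
  have hg : ∀ c : F, f + c • e ∉ u ⊔ span F {e} := fun c hc => hfe <| by
    simpa using sub_mem hc (mem_sup_right (smul_mem _ c (mem_span_singleton_self e)))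
  have hgu : ∀ c : F, f + c • e ∉ u := fun c hc => hg c (mem_sup_left hc)
  have hew : ∀ c : F, e ∉ u ⊔ span F {f + c • e} := fun c he => hg c <| by
    rw [(covers_sup_span_singleton (hgu c)).sup_span_singleton_eq he heu]
    exact mem_sup_right (mem_span_singleton_self _)
  let φ : F → {w // (Covers w u ∧ Covers v w) ∧ e ∉ w} := fun c =>
    ⟨u ⊔ span F {f + c • e}, ⟨covers_sup_span_singleton (hgu c),
      sup_le huv ((span_singleton_le_iff_mem _ _).2 (add_mem hfv (smul_mem _ c hev))),
      by rw [finrank_sup_span_singleton (hgu c)]; omega⟩, hew c⟩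
  have hφinj : Function.Injective φ := fun c c' hcc' => by
    by_contra hne
    have hmem (d : F) : f + d • e ∈ (φ d).1 := mem_sup_right (mem_span_singleton_self _)
    have hdiff := sub_mem (hmem c) (hcc' ▸ hmem c')
    rw [add_sub_add_left_eq_sub, ← sub_smul, smul_mem_iff _ (sub_ne_zero.2 hne)] at hdiff
    exact hew c hdiff
  have hφsurj : Function.Surjective φ := fun ⟨w, ⟨hwu, hvw⟩, hew⟩ => by
    obtain ⟨p, hpw, s, hs, hps⟩ := mem_sup.1 ((hvw.sup_span_singleton_eq hev hew).ge hfv)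
    obtain ⟨a, rfl⟩ := mem_span_singleton.1 hs
    have hp : p = f + (-a) • e := by rw [← hps]; module
    exact ⟨-a, Subtype.ext (hwu.sup_span_singleton_eq (hp ▸ hpw) (hgu _))⟩
  exact (Nat.card_congr (Equiv.ofBijective φ ⟨hφinj, hφsurj⟩)).symm

end LinearAlgebra

section UnitStep

variable {N : ℕ}

def unitStep (m : Fin N) (i : Fin (N + 1)) : ℕ := if m.castSucc < i then 1 else 0

theorem unitStep_zero (m : Fin N) : unitStep m 0 = 0 :=
  if_neg (Fin.not_lt_zero _)

theorem unitStep_succ (m i : Fin N) :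
    unitStep m i.succ = unitStep m i.castSucc + if i = m then 1 else 0 := by
  simp only [unitStep, Fin.castSucc_lt_succ_iff, Fin.castSucc_lt_castSucc_iff]
  split_ifs <;> omega

theorem unitStep_injective : Function.Injective (unitStep (N := N)) := fun m n h => by
  have hm := congrFun h m.succ
  have hn := congrFun h n.succ
  simp only [unitStep, Fin.castSucc_lt_succ_iff] at hm hn
  split_ifs at hm hn <;> omega

theorem unitStep_add_eq {a b c d : Fin N}
    (h : ∀ i, unitStep a i + unitStep b i = unitStep c i + unitStep d i) (hac : a ≠ c) :
    a = d ∧ b = c := by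
  by_cases hbc : b = c
  · subst hbc
    exact ⟨unitStep_injective (funext fun i => by have := h i; omega), rfl⟩
  · have h1 := h c.succ
    have h2 := h c.castSucc
    have h3 : unitStep c c.castSucc = 0 := if_neg (lt_irrefl _)
    simp only [unitStep_succ, if_neg (Ne.symm hac), if_neg (Ne.symm hbc)] at h1
    split_ifs at h1 <;> omega

theorem exists_eq_unitStep {δ : Fin (N + 1) → ℕ} (hδ : Monotone δ) (h0 : δ 0 = 0)
    (hlast : δ (Fin.last N) = 1) : ∃ m : Fin N, δ = unitStep m := by
  induction N with
  | zero => exact absurd (h0.symm.trans hlast) zero_ne_one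
  | succ N ih =>
    have hle : ∀ i, δ i ≤ 1 := fun i => hlast ▸ hδ (Fin.le_last i)
    by_cases h : δ (Fin.last N).castSucc = 1
    · obtain ⟨m, hm⟩ := ih (hδ.comp Fin.strictMono_castSucc.monotone) h0 h
      refine ⟨m.castSucc, funext <| Fin.lastCases ?_ fun i => ?_⟩
      · simp [unitStep, hlast, Fin.castSucc_lt_last]
      · simpa [unitStep] using congrFun hm i
    · refine ⟨Fin.last N, funext <| Fin.lastCases ?_ fun i => ?_⟩
      · simp [unitStep, hlast, Fin.castSucc_lt_last]
      · have := hδ (Fin.castSucc_le_castSucc_iff.2 (Fin.le_last i))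
        have := hle (Fin.last N).castSucc
        simp only [unitStep, Fin.castSucc_lt_castSucc_iff, not_lt.2 (Fin.le_last i), if_false]
        omega

end UnitStep

section Flag

variable {F H : Type*} [Field F] [AddCommGroup H] [Module F H] {N : ℕ}

structure IsFullFlag (x : Fin (N + 1) → Submodule F H) : Prop where
  monotone : Monotone x
  finrank_eq : ∀ i, finrank F (x i) = i
  last_eq_top : x (Fin.last N) = ⊤

/-- For `y` at location `μ`, this is `μ_1 + ⋯ + μ_i`. -/
noncomputable def flagRank (x : Fin (N + 1) → Submodule F H) (y : Submodule F H)
    (i : Fin (N + 1)) : ℕ :=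
  finrank F ↥(y ⊓ x i)

variable {x : Fin (N + 1) → Submodule F H} {u v y z : Submodule F H} {m n : Fin N}

theorem flagRank_last (hx : IsFullFlag x) (y : Submodule F H) :
    flagRank x y (Fin.last N) = finrank F y := by
  rw [flagRank, hx.last_eq_top, inf_top_eq]

theorem MCovers.eq_of_mcovers (h : MCovers x m y z) (h' : MCovers x n y z) : m = n := by
  by_contra hmn
  have h1 := h.2 m
  have h2 := h'.2 m
  rw [if_pos rfl] at h1
  rw [if_neg hmn] at h2
  omega

def DoubleCovers (x : Fin (N + 1) → Submodule F H) (m n : Fin N) (v u : Submodule F H) : Prop :=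
  u ≤ v ∧ finrank F u + 2 = finrank F v ∧
    ∀ i, flagRank x v i = flagRank x u i + unitStep m i + unitStep n i

theorem DoubleCovers.comm (h : DoubleCovers x m n v u) : DoubleCovers x n m v u :=
  ⟨h.1, h.2.1, fun i => by rw [h.2.2 i, add_right_comm]⟩

theorem DoubleCovers.exists_mem_inf (h : DoubleCovers x m n v u) (hmn : m < n) :
    ∃ e ∈ v ⊓ x m.succ, e ∉ u := by
  have hrank := h.2.2 m.succ
  rw [unitStep, unitStep, if_pos (Fin.castSucc_lt_succ),
    if_neg (not_lt.2 (Fin.succ_le_castSucc_iff.2 hmn))] at hrank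
  have hlt : u ⊓ x m.succ < v ⊓ x m.succ := lt_of_le_of_ne (inf_le_inf_right _ h.1)
    fun he => by rw [flagRank, flagRank, he] at hrank; omega
  obtain ⟨e, he, heu⟩ := SetLike.exists_of_lt hlt
  exact ⟨e, he, fun h => heu ⟨h, he.2⟩⟩

variable [FiniteDimensional F H] {w : Submodule F H}

theorem flagRank_zero (hx : IsFullFlag x) (y : Submodule F H) : flagRank x y 0 = 0 :=
  Nat.eq_zero_of_le_zero ((finrank_mono inf_le_right).trans_eq (hx.finrank_eq 0))

theorem flagRank_mono (hzy : z ≤ y) (i : Fin (N + 1)) : flagRank x z i ≤ flagRank x y i :=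
  finrank_mono (inf_le_inf_right _ hzy)

theorem flagRank_add_finrank_le (hzy : z ≤ y) (i : Fin (N + 1)) :
    flagRank x y i + finrank F z ≤ flagRank x z i + finrank F y :=
  finrank_inf_add_finrank_le hzy _

theorem flagRank_eq_iff (hzy : z ≤ y) (i : Fin (N + 1)) :
    flagRank x z i = flagRank x y i ↔ z ⊓ x i = y ⊓ x i :=
  ⟨eq_of_le_of_finrank_eq (inf_le_inf_right _ hzy), fun h => by rw [flagRank, flagRank, h]⟩

theorem flagRank_eq_of_le (hx : IsFullFlag x) (hzy : z ≤ y) {i j : Fin (N + 1)} (hij : i ≤ j)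
    (h : flagRank x z j = flagRank x y j) : flagRank x z i = flagRank x y i := by
  rw [flagRank_eq_iff hzy] at h ⊢
  rw [← inf_eq_right.2 (hx.monotone hij), ← inf_assoc, ← inf_assoc, h]

theorem loc_add_flagRank (hx : IsFullFlag x) (y : Submodule F H) (i : Fin N) :
    loc x y i + flagRank x y i.castSucc = flagRank x y i.succ :=
  Nat.sub_add_cancel (finrank_mono (inf_le_inf_left _ (hx.monotone (Fin.castSucc_le_succ i))))

theorem loc_le_one (hx : IsFullFlag x) (y : Submodule F H) (i : Fin N) : loc x y i ≤ 1 := by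
  have hstep := finrank_inf_add_finrank_le (hx.monotone (Fin.castSucc_le_succ i)) y
  rw [hx.finrank_eq, hx.finrank_eq, inf_comm, inf_comm (x _)] at hstep
  have := loc_add_flagRank hx y i
  simp only [flagRank, Fin.val_succ, Fin.val_castSucc] at hstep this
  omega

theorem mcovers_iff (hx : IsFullFlag x) :
    MCovers x m y z ↔ Covers y z ∧ ∀ i, flagRank x y i = flagRank x z i + unitStep m i := by
  refine and_congr_right fun _ => ⟨fun hloc i => ?_, fun hrank i => ?_⟩
  · induction i using Fin.induction with
    | zero => simp [flagRank_zero hx, unitStep_zero]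
    | succ i ih =>
      have := loc_add_flagRank hx y i
      have := loc_add_flagRank hx z i
      have := hloc i
      rw [unitStep_succ]
      omega
  · have := loc_add_flagRank hx y i
    have := loc_add_flagRank hx z i
    have := hrank i.castSucc
    have hsucc := hrank i.succ
    rw [unitStep_succ] at hsucc
    omega

theorem Covers.exists_mcovers (hx : IsFullFlag x) (h : Covers y z) : ∃ m, MCovers x m y z := by
  have hδ : Monotone fun i => flagRank x y i - flagRank x z i := fun i j hij => show
      flagRank x y i - flagRank x z i ≤ flagRank x y j - flagRank x z j by
    have := flagRank_add_finrank_le (x := x) h.1 i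
    have := flagRank_add_finrank_le (x := x) h.1 j
    have := flagRank_mono (x := x) h.1 i
    have := flagRank_mono (x := x) h.1 j
    have := flagRank_eq_of_le hx h.1 hij
    have := h.2
    omega
  obtain ⟨m, hm⟩ := exists_eq_unitStep hδ (by simp [flagRank_zero hx])
    (by simp only [flagRank_last hx, ← h.2]; omega)
  refine ⟨m, (mcovers_iff hx).2 ⟨h, fun i => ?_⟩⟩
  have : flagRank x y i - flagRank x z i = unitStep m i := congrFun hm i
  have := flagRank_mono (x := x) h.1 i
  omega

theorem MCovers.not_mcovers (hx : IsFullFlag x) (h : MCovers x m w u) : ¬ MCovers x m v w :=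
  fun h' => by
    have h1 := h.2 m
    have h2 := h'.2 m
    have := loc_le_one hx v m
    rw [if_pos rfl] at h1 h2
    omega

theorem MCovers.inf_eq_of_le (hx : IsFullFlag x) (h : MCovers x n w u) {i : Fin (N + 1)}
    (hi : i ≤ n.castSucc) : w ⊓ x i = u ⊓ x i :=
  ((flagRank_eq_iff h.1.1 i).1 (by
    rw [((mcovers_iff hx).1 h).2 i, unitStep, if_neg (not_lt.2 hi), add_zero])).symm

theorem unitStep_add_eq_of_mcovers {a b c d : Fin N} (hx : IsFullFlag x)
    (hwy : MCovers x a w y) (hyu : MCovers x b y u) (hwz : MCovers x c w z)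
    (hzu : MCovers x d z u) (i : Fin (N + 1)) :
    unitStep a i + unitStep b i = unitStep c i + unitStep d i := by
  have := ((mcovers_iff hx).1 hwy).2 i
  have := ((mcovers_iff hx).1 hyu).2 i
  have := ((mcovers_iff hx).1 hwz).2 i
  have := ((mcovers_iff hx).1 hzu).2 i
  omega

theorem MCovers.mcovers_inf (hx : IsFullFlag x) (hmn : m ≠ n) (hy : MCovers x m w y)
    (hz : MCovers x n w z) : MCovers x n y (y ⊓ z) ∧ MCovers x m z (y ⊓ z) := by
  have hyz : y ≠ z := by rintro rfl; exact hmn (hy.eq_of_mcovers hz)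
  obtain ⟨hcy, hcz⟩ := hy.1.inf_covers hz.1 hyz
  obtain ⟨a, ha⟩ := hcy.exists_mcovers hx
  obtain ⟨b, hb⟩ := hcz.exists_mcovers hx
  obtain ⟨rfl, rfl⟩ := unitStep_add_eq (unitStep_add_eq_of_mcovers hx hy ha hz hb) hmn
  exact ⟨ha, hb⟩

theorem MCovers.mcovers_sup (hx : IsFullFlag x) (hmn : m ≠ n) (hy : MCovers x n y u)
    (hz : MCovers x m z u) : MCovers x m (y ⊔ z) y ∧ MCovers x n (y ⊔ z) z := by
  have hyz : y ≠ z := by rintro rfl; exact hmn (hz.eq_of_mcovers hy)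
  obtain ⟨hcy, hcz⟩ := hy.1.sup_covers hz.1 hyz
  obtain ⟨a, ha⟩ := hcy.exists_mcovers hx
  obtain ⟨b, hb⟩ := hcz.exists_mcovers hx
  obtain ⟨rfl, rfl⟩ := unitStep_add_eq
    (fun i => (add_comm _ _).trans <| (unitStep_add_eq_of_mcovers hx ha hy hb hz i).trans
      (add_comm _ _)) hmn.symm
  exact ⟨ha, hb⟩

def mcoversUpperEquivLower (hx : IsFullFlag x) (hmn : m ≠ n) (y z : Submodule F H) :
    {w // MCovers x m w y ∧ MCovers x n w z} ≃ {w // MCovers x n y w ∧ MCovers x m z w} where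
  toFun w := ⟨y ⊓ z, w.2.1.mcovers_inf hx hmn w.2.2⟩
  invFun w := ⟨y ⊔ z, w.2.1.mcovers_sup hx hmn w.2.2⟩
  left_inv w := Subtype.ext <|
    w.2.1.1.sup_eq w.2.2.1 (by rintro rfl; exact hmn (w.2.1.eq_of_mcovers w.2.2))
  right_inv w := Subtype.ext <|
    w.2.1.1.inf_eq w.2.2.1 (by rintro rfl; exact hmn (w.2.2.eq_of_mcovers w.2.1))

theorem MCovers.doubleCovers (hx : IsFullFlag x) (hwu : MCovers x m w u)
    (hvw : MCovers x n v w) : DoubleCovers x m n v u := by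
  rw [mcovers_iff hx] at hwu hvw
  refine ⟨hwu.1.1.trans hvw.1.1, by have := hwu.1.2; have := hvw.1.2; omega, fun i => ?_⟩
  have := hwu.2 i
  have := hvw.2 i
  omega

theorem DoubleCovers.mcovers_or (hx : IsFullFlag x) (h : DoubleCovers x m n v u)
    (hwu : Covers w u) (hvw : Covers v w) :
    (MCovers x m w u ∧ MCovers x n v w) ∨ (MCovers x n w u ∧ MCovers x m v w) := by
  obtain ⟨a, ha⟩ := hwu.exists_mcovers hx
  obtain ⟨b, hb⟩ := hvw.exists_mcovers hx
  have hsum : ∀ i, unitStep a i + unitStep b i = unitStep m i + unitStep n i := fun i => by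
    have := ((mcovers_iff hx).1 ha).2 i
    have := ((mcovers_iff hx).1 hb).2 i
    have := h.2.2 i
    omega
  by_cases ham : a = m
  · subst ham
    obtain rfl : b = n := unitStep_injective (funext fun i => by have := hsum i; omega)
    exact Or.inl ⟨ha, hb⟩
  · obtain ⟨rfl, rfl⟩ := unitStep_add_eq hsum ham
    exact Or.inr ⟨ha, hb⟩

theorem card_mcovers_mul_card (hx : IsFullFlag x) (hmn : m < n) (u v : Submodule F H) :
    Nat.card {w // MCovers x m w u ∧ MCovers x n v w} * Nat.card F =
      Nat.card {w // MCovers x n w u ∧ MCovers x m v w} := by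
  by_cases hd : DoubleCovers x m n v u
  · obtain ⟨e, he, heu⟩ := hd.exists_mem_inf hmn
    have hle : m.succ ≤ n.castSucc := Fin.succ_le_castSucc_iff.2 hmn
    have hmem {w} (h : MCovers x n v w) : e ∈ w := ((h.inf_eq_of_le hx hle).le he).1
    have hnot {w} (h : MCovers x n w u) (hew : e ∈ w) : False :=
      heu ((h.inf_eq_of_le hx hle).le ⟨hew, he.2⟩).1
    have hmn_iff (w) :
        MCovers x m w u ∧ MCovers x n v w ↔ (Covers w u ∧ Covers v w) ∧ e ∈ w :=
      ⟨fun h => ⟨⟨h.1.1, h.2.1⟩, hmem h.2⟩, fun ⟨hc, hew⟩ =>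
        (hd.mcovers_or hx hc.1 hc.2).resolve_right fun h => hnot h.1 hew⟩
    have hnm_iff (w) :
        MCovers x n w u ∧ MCovers x m v w ↔ (Covers w u ∧ Covers v w) ∧ e ∉ w :=
      ⟨fun h => ⟨⟨h.1.1, h.2.1⟩, hnot h.1⟩, fun ⟨hc, hew⟩ =>
        (hd.mcovers_or hx hc.1 hc.2).resolve_left fun h => hew (hmem h.2)⟩
    rw [Nat.card_congr (Equiv.subtypeEquivRight hmn_iff),
      Nat.card_congr (Equiv.subtypeEquivRight hnm_iff),
      card_covers_covers_mem hd.1 hd.2.1 he.1 heu,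
      card_covers_covers_not_mem hd.1 hd.2.1 he.1 heu, one_mul]
  · have : IsEmpty {w // MCovers x m w u ∧ MCovers x n v w} :=
      ⟨fun w => hd (w.2.1.doubleCovers hx w.2.2)⟩
    have : IsEmpty {w // MCovers x n w u ∧ MCovers x m v w} :=
      ⟨fun w => hd (w.2.1.doubleCovers hx w.2.2).comm⟩
    simp

end Flag

theorem Matrix.of_ite_mul_of_ite_apply {ι R : Type*} [Fintype ι] [NonAssocSemiring R]
    (r s : ι → ι → Prop) [DecidableRel r] [DecidableRel s] (i k : ι) :
    (Matrix.of (fun i j => if r i j then (1 : R) else 0) *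
      Matrix.of fun j k => if s j k then 1 else 0 : Matrix ι ι R) i k =
      Nat.card {j // r i j ∧ s j k} := by
  simp only [Matrix.mul_apply, Matrix.of_apply, ite_mul, one_mul, zero_mul, ← ite_and]
  rw [Finset.sum_boole, Nat.card_eq_fintype_card, Fintype.card_subtype]

section Matrices

variable {F H : Type*} [Field F] [AddCommGroup H] [Module F H] [FiniteDimensional F H]
  [Fintype (Submodule F H)] {N : ℕ} {x : Fin (N + 1) → Submodule F H} {m n : Fin N}

theorem Lmat_mul_self (hx : IsFullFlag x) (m : Fin N) : Lmat x m * Lmat x m = 0 := by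
  ext y z
  have : IsEmpty {w // MCovers x m w y ∧ MCovers x m z w} :=
    ⟨fun w => w.2.1.not_mcovers hx w.2.2⟩
  simp [Lmat, Matrix.of_ite_mul_of_ite_apply]

theorem Rmat_mul_self (hx : IsFullFlag x) (m : Fin N) : Rmat x m * Rmat x m = 0 := by
  ext y z
  have : IsEmpty {w // MCovers x m y w ∧ MCovers x m w z} :=
    ⟨fun w => w.2.2.not_mcovers hx w.2.1⟩
  simp [Rmat, Matrix.of_ite_mul_of_ite_apply]

theorem smul_Lmat_mul_Lmat (hx : IsFullFlag x) (hmn : m < n) :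
    (Nat.card F : ℂ) • (Lmat x m * Lmat x n) = Lmat x n * Lmat x m := by
  ext y z
  simp only [Lmat, Matrix.smul_apply, Matrix.of_ite_mul_of_ite_apply, smul_eq_mul,
    ← card_mcovers_mul_card hx hmn y z, Nat.cast_mul, mul_comm]

theorem Rmat_mul_Rmat (hx : IsFullFlag x) (hmn : m < n) :
    Rmat x m * Rmat x n = (Nat.card F : ℂ) • (Rmat x n * Rmat x m) := by
  ext y z
  simp only [Rmat, Matrix.smul_apply, Matrix.of_ite_mul_of_ite_apply, smul_eq_mul]
  rw [Nat.card_congr (Equiv.subtypeEquivRight fun _ => and_comm),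
    ← card_mcovers_mul_card hx hmn z y,
    Nat.card_congr (Equiv.subtypeEquivRight fun _ => and_comm), Nat.cast_mul, mul_comm]

theorem Lmat_mul_Rmat_comm (hx : IsFullFlag x) (hmn : m ≠ n) :
    Lmat x m * Rmat x n = Rmat x n * Lmat x m := by
  ext y z
  simp only [Lmat, Rmat, Matrix.of_ite_mul_of_ite_apply,
    Nat.card_congr (mcoversUpperEquivLower hx hmn y z)]

end Matrices

theorem stmt17_general {F : Type*} [Field F] [Fintype F] {H : Type*} [AddCommGroup H] [Module F H]
    [FiniteDimensional F H] [Fintype (Submodule F H)] {N : ℕ}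
    (hdim : Module.finrank F H = N)
    (x : Fin (N + 1) → Submodule F H) (hrank : ∀ i, Module.finrank F ↥(x i) = (i : ℕ))
    (hmono : StrictMono x) (m n : Fin N) :
    Lmat x m * Lmat x m = 0 ∧ Rmat x m * Rmat x m = 0 ∧
      (m < n → (Fintype.card F : ℂ) • (Lmat x m * Lmat x n) = Lmat x n * Lmat x m) ∧
      (m < n → Rmat x m * Rmat x n = (Fintype.card F : ℂ) • (Rmat x n * Rmat x m)) ∧
      (m ≠ n → Lmat x m * Rmat x n = Rmat x n * Lmat x m) := by
  have hx : IsFullFlag x :=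
    ⟨hmono.monotone, hrank, eq_top_of_finrank_eq (by rw [hrank, hdim, Fin.val_last])⟩
  rw [← Nat.card_eq_fintype_card]
  exact ⟨Lmat_mul_self hx m, Rmat_mul_self hx m, smul_Lmat_mul_Lmat hx, Rmat_mul_Rmat hx,
    Lmat_mul_Rmat_comm hx⟩

/-- `L_m² = R_m² = 0`; `q L_m L_n = L_n L_m` for `m < n`; `R_m R_n = q R_n R_m` for
`m < n`; and `L_m R_n = R_n L_m` for `m ≠ n`. -/
theorem stmt17 {F : Type*} [Field F] [Fintype F] {H : Type*} [AddCommGroup H] [Module F H]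
    [FiniteDimensional F H] [Fintype (Submodule F H)] {N : ℕ}
    (hN : 1 ≤ N) (hdim : Module.finrank F H = N)
    (x : Fin (N + 1) → Submodule F H) (hrank : ∀ i, Module.finrank F ↥(x i) = (i : ℕ))
    (hmono : StrictMono x) (m n : Fin N) :
    Lmat x m * Lmat x m = 0 ∧ Rmat x m * Rmat x m = 0 ∧
      (m < n → (Fintype.card F : ℂ) • (Lmat x m * Lmat x n) = Lmat x n * Lmat x m) ∧
      (m < n → Rmat x m * Rmat x n = (Fintype.card F : ℂ) • (Rmat x n * Rmat x m)) ∧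
      (m ≠ n → Lmat x m * Rmat x n = Rmat x n * Lmat x m) :=
  stmt17_general hdim x hrank hmono m n
end
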